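/- arXiv:1906.00523 — 2 statements merged into one kernel-verified Lean document; each statement's English description precedes it below -/
import Mathlib

section
/- Let (γ₁,γ₂) be an admissible pair of regular curves in S² admitting lifts, and let θ ∈ ℝ satisfy cos θ − κᵢ(s) sin θ > 0 for i = 1,2 and all s ∈ ℝ. Set γ̄ᵢ(s) := γᵢ^θ(s) (the parallel curves). Then (γ̄₁,γ̄₂) is an admissible pair, and f_{γ̄₁,γ̄₂}(s₁,s₂) = g f_{γ₁,γ₂}(s₁,s₂) g⁻¹ for all (s₁,s₂) ∈ ℝ², where g = exp(θe₁/2) ∈ SU(2). -/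
noncomputable section

open Matrix

/-- Euclidean 3-space (as triples of reals). -/
abbrev R3 : Type := Fin 3 → ℝ

/-- The Euclidean inner product on ℝ³. -/
def dot3 (a b : R3) : ℝ := a 0 * b 0 + a 1 * b 1 + a 2 * b 2

/-- The Euclidean norm on ℝ³. -/
def norm3 (a : R3) : ℝ := Real.sqrt (dot3 a a)

/-- The cross product on ℝ³. -/
def cross3 (a b : R3) : R3 :=
  ![a 1 * b 2 - a 2 * b 1, a 2 * b 0 - a 0 * b 2, a 0 * b 1 - a 1 * b 0]

/-- The determinant of three vectors in ℝ³. -/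
def det3 (a b c : R3) : ℝ := dot3 a (cross3 b c)

/-- `γ : ℝ → ℝ³` is a regular curve in the unit sphere S²:
it is smooth, takes values in S², and has nowhere-vanishing derivative. -/
structure IsRegularCurve (γ : ℝ → R3) : Prop where
  smooth : ContDiff ℝ (⊤ : ℕ∞) γ
  sphere : ∀ s, dot3 (γ s) (γ s) = 1
  reg : ∀ s, deriv γ s ≠ 0

/-- The geodesic curvature `κ(s) = det(γ, γ', γ'')/|γ'|³` of a curve in S². -/
def kappa (γ : ℝ → R3) (s : ℝ) : ℝ :=
  det3 (γ s) (deriv γ s) (deriv (deriv γ) s) / norm3 (deriv γ s) ^ 3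

/-- The unit normal `n(s) = (γ × γ')/|γ'|` of a curve in S². -/
def unitNormal (γ : ℝ → R3) (s : ℝ) : R3 :=
  (norm3 (deriv γ s))⁻¹ • cross3 (γ s) (deriv γ s)

/-- `γ` is closed of period `l > 0`. -/
def HasPeriod (γ : ℝ → R3) (l : ℝ) : Prop := 0 < l ∧ ∀ s, γ (s + l) = γ s

/-- 2×2 complex matrices. -/
abbrev Mat2 := Matrix (Fin 2) (Fin 2) ℂ

def E1 : Mat2 := !![0, Complex.I; Complex.I, 0]
def E2 : Mat2 := !![0, -1; 1, 0]
def E3 : Mat2 := !![Complex.I, 0; 0, -Complex.I]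

/-- The identification of ℝ³ with su(2) via the orthonormal basis e₁, e₂, e₃. -/
def toSu2 (v : R3) : Mat2 := (v 0 : ℂ) • E1 + (v 1 : ℂ) • E2 + (v 2 : ℂ) • E3

/-- The adjoint action `Ad(a)x = a x a⁻¹`. -/
def AdM (a x : Mat2) : Mat2 := a * x * a⁻¹

/-- `c : ℝ → SU(2)` is a lift of the regular curve `γ` in S²:
it is smooth (entrywise), takes values in SU(2), and satisfies
`Ad(c(s))e₃ = γ(s)` and `Ad(c(s))e₁ = γ'(s)/|γ'(s)|` under `toSu2`. -/
structure IsLift (γ : ℝ → R3) (c : ℝ → Mat2) : Prop where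
  mem : ∀ s, c s ∈ Matrix.specialUnitaryGroup (Fin 2) ℂ
  smooth : ∀ i j, ContDiff ℝ (⊤ : ℕ∞) fun s => c s i j
  ad3 : ∀ s, AdM (c s) E3 = toSu2 (γ s)
  ad1 : ∀ s, AdM (c s) E1 = toSu2 ((norm3 (deriv γ s))⁻¹ • deriv γ s)

/-- The entrywise derivative of a matrix-valued curve. -/
def matDeriv (c : ℝ → Mat2) (s : ℝ) : Mat2 :=
  Matrix.of fun i j => deriv (fun t => c t i j) s

/-- The map `f_{γ₁,γ₂}(s₁,s₂) = c₁(0)⁻¹ c₁(s₁) c₂(s₂)⁻¹ c₂(0)` associated to lifts `c₁, c₂`. -/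
def fmap (c1 c2 : ℝ → Mat2) (s1 s2 : ℝ) : Mat2 :=
  (c1 0)⁻¹ * c1 s1 * (c2 s2)⁻¹ * c2 0

/-- `(γ₁, γ₂)` is an admissible pair. -/
structure IsAdmissiblePair (γ1 γ2 : ℝ → R3) : Prop where
  reg1 : IsRegularCurve γ1
  reg2 : IsRegularCurve γ2
  param1 : ∀ s, norm3 (deriv γ1 s) ^ 2 * (1 + kappa γ1 s ^ 2) = 4
  param2 : ∀ s, norm3 (deriv γ2 s) ^ 2 * (1 + kappa γ2 s ^ 2) = 4
  curv : ∀ s1 s2, kappa γ2 s2 < kappa γ1 s1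

/-- The restriction of `γ` to `[a,b]` is a shell. -/
def IsShell (γ : ℝ → R3) (a b : ℝ) : Prop :=
  a < b ∧ Set.InjOn γ (Set.Ico a b) ∧ γ a = γ b ∧
    LinearIndependent ℝ ![deriv γ a, deriv γ b]

/-- A positive shell: `det(γ(a), γ'(a), γ'(b)) < 0`. -/
def IsPositiveShell (γ : ℝ → R3) (a b : ℝ) : Prop :=
  IsShell γ a b ∧ det3 (γ a) (deriv γ a) (deriv γ b) < 0

/-- A negative shell: `det(γ(a), γ'(a), γ'(b)) > 0`. -/
def IsNegativeShell (γ : ℝ → R3) (a b : ℝ) : Prop :=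
  IsShell γ a b ∧ 0 < det3 (γ a) (deriv γ a) (deriv γ b)

/-- The unit sphere S² in ℝ³. -/
def sphere2 : Set R3 := {x | dot3 x x = 1}

/-- The μ-circle with center `o ∈ S²`. -/
def muCircle (μ : ℝ) (o : R3) : Set R3 :=
  {x | dot3 x x = 1 ∧ dot3 x o = μ / Real.sqrt (1 + μ ^ 2)}

/-- The (open) interior domain of the μ-circle with center `o ∈ S²`. -/
def muDisk (μ : ℝ) (o : R3) : Set R3 :=
  {x | dot3 x x = 1 ∧ μ / Real.sqrt (1 + μ ^ 2) < dot3 x o}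

def normalize3 (v : R3) : R3 := (norm3 v)⁻¹ • v

/-- `Δ` is the interior domain of the shell `γ|_{[a,b]}`: it is a connected component of the
complement of the image of the shell in S², and for each `s ∈ (a,b)` the points obtained by
pushing `γ(s)` slightly in the direction `σ • n(s)` (σ = 1 for a positive shell, σ = -1 for a
negative shell) belong to `Δ`. -/
def IsInteriorDomain (γ : ℝ → R3) (a b σ : ℝ) (Δ : Set R3) : Prop :=
  (∃ p ∈ sphere2 \ γ '' Set.Icc a b,
      Δ = connectedComponentIn (sphere2 \ γ '' Set.Icc a b) p) ∧
    ∀ s ∈ Set.Ioo a b, ∃ ε > 0, ∀ δ ∈ Set.Ioo (0 : ℝ) ε,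
      normalize3 (γ s + (σ * δ) • unitNormal γ s) ∈ Δ

/-- The center `o_t = (μ γ(t) + n(t))/√(1+μ²)` of the tangent μ-circle to `γ` at `γ(t)`
on the normal side. -/
def tangentCenter (μ : ℝ) (γ : ℝ → R3) (t : ℝ) : R3 :=
  (Real.sqrt (1 + μ ^ 2))⁻¹ • (μ • γ t + unitNormal γ t)

/-- The rotation of ℝ³ through angle `θ` about the oriented (unit) axis `o`. -/
def rot3 (o : R3) (θ : ℝ) (x : R3) : R3 :=
  Real.cos θ • x + Real.sin θ • cross3 o x + ((1 - Real.cos θ) * dot3 o x) • o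

/-- A closed regular curve of period `l` is generic: every self-intersection is a
transversal double point. -/
def IsGeneric (γ : ℝ → R3) (l : ℝ) : Prop :=
  ∀ s t : ℝ, γ s = γ t → (¬∃ k : ℤ, s - t = k * l) →
    LinearIndependent ℝ ![deriv γ s, deriv γ t] ∧
      ∀ u : ℝ, γ u = γ s → (∃ k : ℤ, u - s = k * l) ∨ (∃ k : ℤ, u - t = k * l)

/-- The number of crossings (self-intersection points) of a closed curve of period `l`. -/
def crossings (γ : ℝ → R3) (l : ℝ) : ℕ :=
  Set.ncard {p : R3 | ∃ s t : ℝ, γ s = p ∧ γ t = p ∧ ¬∃ k : ℤ, s - t = k * l}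

/-- The spherical (geodesic) distance on S³, identified with SU(2):
`dist(A,B) = arccos(Re trace(A Bᴴ)/2)`, which corresponds to the round distance on the
unit sphere S³ ⊂ ℝ⁴. -/
def distS3 (A B : Mat2) : ℝ := Real.arccos ((Matrix.trace (A * Bᴴ)).re / 2)

/-- The extrinsic diameter of the image of the map `f` associated to the lifts `c₁, c₂`. -/
def extDiam (c1 c2 : ℝ → Mat2) : ℝ :=
  sSup {d : ℝ | ∃ s1 s2 u1 u2 : ℝ, d = distS3 (fmap c1 c2 s1 s2) (fmap c1 c2 u1 u2)}

/-- The parallel curve `γ^θ = (cos θ) γ + (sin θ) n`. -/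
def parallelCurve (γ : ℝ → R3) (θ : ℝ) (s : ℝ) : R3 :=
  Real.cos θ • γ s + Real.sin θ • unitNormal γ s

/-- The arclength-type parameter `s(t) = (1/2)∫₀ᵗ |γ'(u)|√(1+κ(u)²) du`. -/
def arcParam (γ : ℝ → R3) (t : ℝ) : ℝ :=
  (1 / 2) * ∫ u in (0 : ℝ)..t, norm3 (deriv γ u) * Real.sqrt (1 + kappa γ u ^ 2)


section VecAlg

lemma dot3_comm (a b : R3) : dot3 a b = dot3 b a := by unfold dot3; ring

lemma lagrange3 (a b c d : R3) :
    dot3 (cross3 a b) (cross3 c d) = dot3 a c * dot3 b d - dot3 a d * dot3 b c := by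
  simp [dot3, cross3]; ring

lemma cross3_self (a : R3) : cross3 a a = 0 := by
  funext i; fin_cases i <;> simp [cross3] <;> ring

lemma dot3_self_cross (a b : R3) : dot3 a (cross3 a b) = 0 := by
  simp [dot3, cross3]; ring

lemma key_vec (a b c : R3) :
    (dot3 b b) • cross3 a c - (dot3 b c) • cross3 a b + (det3 a b c) • b
      = (dot3 a b) • cross3 b c := by
  funext i; fin_cases i <;> simp [dot3, cross3, det3] <;> ring

lemma dot3_self_nonneg (a : R3) : 0 ≤ dot3 a a := by unfold dot3; nlinarith [sq_nonneg (a 0), sq_nonneg (a 1), sq_nonneg (a 2)]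

lemma dot3_self_pos {a : R3} (ha : a ≠ 0) : 0 < dot3 a a := by
  rcases (dot3_self_nonneg a).lt_or_eq with h | h
  · exact h
  · exfalso; apply ha; funext i
    have h0 : a 0 ^ 2 + a 1 ^ 2 + a 2 ^ 2 = 0 := by unfold dot3 at h; nlinarith [sq_nonneg (a 0), sq_nonneg (a 1), sq_nonneg (a 2)]
    have : a 0 = 0 ∧ a 1 = 0 ∧ a 2 = 0 := by
      refine ⟨?_, ?_, ?_⟩ <;> nlinarith [sq_nonneg (a 0), sq_nonneg (a 1), sq_nonneg (a 2)]
    fin_cases i <;> simp [this.1, this.2.1, this.2.2]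

end VecAlg

section DerivHelpers

lemma hasDerivAt_dot3 {f g : ℝ → R3} {f' g' : R3} {s : ℝ}
    (hf : HasDerivAt f f' s) (hg : HasDerivAt g g' s) :
    HasDerivAt (fun t => dot3 (f t) (g t)) (dot3 f' (g s) + dot3 (f s) g') s := by
  have hfi := hasDerivAt_pi.mp hf
  have hgi := hasDerivAt_pi.mp hg
  have h := (((hfi 0).mul (hgi 0)).add ((hfi 1).mul (hgi 1))).add ((hfi 2).mul (hgi 2))
  have : (fun t => dot3 (f t) (g t)) = fun t => (f t 0 * g t 0 + f t 1 * g t 1) + f t 2 * g t 2 := by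
    funext t; unfold dot3; ring
  rw [this]
  exact h.congr_deriv (by unfold dot3; ring)

lemma hasDerivAt_cross3 {f g : ℝ → R3} {f' g' : R3} {s : ℝ}
    (hf : HasDerivAt f f' s) (hg : HasDerivAt g g' s) :
    HasDerivAt (fun t => cross3 (f t) (g t)) (cross3 f' (g s) + cross3 (f s) g') s := by
  have hfi := hasDerivAt_pi.mp hf
  have hgi := hasDerivAt_pi.mp hg
  apply hasDerivAt_pi.mpr
  intro i
  fin_cases i
  · have h := ((hfi 1).mul (hgi 2)).sub ((hfi 2).mul (hgi 1))
    have e : (fun t => cross3 (f t) (g t) 0) = fun t => f t 1 * g t 2 - f t 2 * g t 1 := by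
      funext t; simp [cross3]
    show HasDerivAt (fun t => cross3 (f t) (g t) 0) ((cross3 f' (g s) + cross3 (f s) g') 0) s
    rw [e]; exact h.congr_deriv (by simp [cross3] <;> ring)
  · have h := ((hfi 2).mul (hgi 0)).sub ((hfi 0).mul (hgi 2))
    have e : (fun t => cross3 (f t) (g t) 1) = fun t => f t 2 * g t 0 - f t 0 * g t 2 := by
      funext t; simp [cross3]
    show HasDerivAt (fun t => cross3 (f t) (g t) 1) ((cross3 f' (g s) + cross3 (f s) g') 1) s
    rw [e]
    exact h.congr_deriv (by simp [cross3] <;> ring)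
  · have h := ((hfi 0).mul (hgi 1)).sub ((hfi 1).mul (hgi 0))
    have e : (fun t => cross3 (f t) (g t) 2) = fun t => f t 0 * g t 1 - f t 1 * g t 0 := by
      funext t; simp [cross3]
    show HasDerivAt (fun t => cross3 (f t) (g t) 2) ((cross3 f' (g s) + cross3 (f s) g') 2) s
    rw [e]
    exact h.congr_deriv (by simp [cross3] <;> ring)

end DerivHelpers

section RegCurve

variable {γ : ℝ → R3}

lemma contDiff_omega_deriv {F : Type*} [NormedAddCommGroup F] [NormedSpace ℝ F] {f : ℝ → F}
    (hf : ContDiff ℝ (⊤ : ℕ∞) f) : ContDiff ℝ (⊤ : ℕ∞) (deriv f) := by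
  have h : ContDiff ℝ (((⊤ : ℕ∞) : WithTop ℕ∞) + 1) f := hf.of_le (by exact_mod_cast le_top)
  exact (contDiff_succ_iff_deriv.mp h).2.2

lemma RC.hasDeriv (hγ : IsRegularCurve γ) (s : ℝ) : HasDerivAt γ (deriv γ s) s :=
  ((hγ.smooth.differentiable (by simp)) s).hasDerivAt

lemma RC.deriv_smooth (hγ : IsRegularCurve γ) : ContDiff ℝ (⊤ : ℕ∞) (deriv γ) :=
  contDiff_omega_deriv hγ.smooth

lemma RC.hasDeriv2 (hγ : IsRegularCurve γ) (s : ℝ) :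
    HasDerivAt (deriv γ) (deriv (deriv γ) s) s :=
  ((RC.deriv_smooth hγ).differentiable (by simp) s).hasDerivAt

lemma RC.deriv2_smooth (hγ : IsRegularCurve γ) : ContDiff ℝ (⊤ : ℕ∞) (deriv (deriv γ)) :=
  contDiff_omega_deriv (RC.deriv_smooth hγ)

lemma RC.hasDeriv3 (hγ : IsRegularCurve γ) (s : ℝ) :
    HasDerivAt (deriv (deriv γ)) (deriv (deriv (deriv γ)) s) s :=
  ((RC.deriv2_smooth hγ).differentiable (by simp) s).hasDerivAt

lemma RC.q_pos (hγ : IsRegularCurve γ) (s : ℝ) : 0 < dot3 (deriv γ s) (deriv γ s) :=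
  dot3_self_pos (hγ.reg s)

lemma RC.r_pos (hγ : IsRegularCurve γ) (s : ℝ) : 0 < norm3 (deriv γ s) :=
  Real.sqrt_pos.mpr (RC.q_pos hγ s)

lemma RC.r_sq (hγ : IsRegularCurve γ) (s : ℝ) :
    norm3 (deriv γ s) ^ 2 = dot3 (deriv γ s) (deriv γ s) :=
  Real.sq_sqrt (RC.q_pos hγ s).le

lemma RC.orth1 (hγ : IsRegularCurve γ) (s : ℝ) : dot3 (γ s) (deriv γ s) = 0 := by
  have h1 : HasDerivAt (fun t => dot3 (γ t) (γ t))
      (dot3 (deriv γ s) (γ s) + dot3 (γ s) (deriv γ s)) s :=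
    hasDerivAt_dot3 (RC.hasDeriv hγ s) (RC.hasDeriv hγ s)
  have h2 : (fun t => dot3 (γ t) (γ t)) = fun _ => (1 : ℝ) := funext hγ.sphere
  have h3 := h1.unique (h2 ▸ hasDerivAt_const s (1 : ℝ))
  have := dot3_comm (deriv γ s) (γ s)
  linarith

lemma RC.orth2 (hγ : IsRegularCurve γ) (s : ℝ) :
    dot3 (γ s) (deriv (deriv γ) s) = - dot3 (deriv γ s) (deriv γ s) := by
  have h1 : HasDerivAt (fun t => dot3 (γ t) (deriv γ t))
      (dot3 (deriv γ s) (deriv γ s) + dot3 (γ s) (deriv (deriv γ) s)) s :=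
    hasDerivAt_dot3 (RC.hasDeriv hγ s) (RC.hasDeriv2 hγ s)
  have h2 : (fun t => dot3 (γ t) (deriv γ t)) = fun _ => (0 : ℝ) := funext (RC.orth1 hγ)
  have h3 := h1.unique (h2 ▸ hasDerivAt_const s (0 : ℝ))
  linarith

lemma RC.hasDeriv_r (hγ : IsRegularCurve γ) (s : ℝ) :
    HasDerivAt (fun t => norm3 (deriv γ t))
      (dot3 (deriv γ s) (deriv (deriv γ) s) / norm3 (deriv γ s)) s := by
  have hq : HasDerivAt (fun t => dot3 (deriv γ t) (deriv γ t))
      (dot3 (deriv (deriv γ) s) (deriv γ s) + dot3 (deriv γ s) (deriv (deriv γ) s)) s :=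
    hasDerivAt_dot3 (RC.hasDeriv2 hγ s) (RC.hasDeriv2 hγ s)
  have hs := (Real.hasDerivAt_sqrt (RC.q_pos hγ s).ne').comp s hq
  have : (Real.sqrt ∘ fun t => dot3 (deriv γ t) (deriv γ t)) = fun t => norm3 (deriv γ t) := rfl
  rw [this] at hs
  refine hs.congr_deriv (Eq.symm ?_)
  have hc := dot3_comm (deriv (deriv γ) s) (deriv γ s)
  have hr := RC.r_pos hγ s
  unfold norm3 at hr ⊢
  field_simp
  ring_nf
  rw [hc]
  ring

end RegCurve

section Parallel

variable {γ : ℝ → R3} {θ : ℝ}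

lemma norm3_smul (a : ℝ) (v : R3) : norm3 (a • v) = |a| * norm3 v := by
  unfold norm3
  have : dot3 (a • v) (a • v) = a ^ 2 * dot3 v v := by
    unfold dot3; simp [Pi.smul_apply, smul_eq_mul]; ring
  rw [this, Real.sqrt_mul (sq_nonneg a), Real.sqrt_sq_eq_abs]

lemma cross3_smul_right (a : ℝ) (u v : R3) : cross3 u (a • v) = a • cross3 u v := by
  funext i; fin_cases i <;> simp [cross3] <;> ring

lemma dot3_smul_right (a : ℝ) (u v : R3) : dot3 u (a • v) = a * dot3 u v := by
  unfold dot3; simp [Pi.smul_apply, smul_eq_mul]; ring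

/-- The derivative of the parallel curve. -/
lemma hasDerivAt_parallel (hγ : IsRegularCurve γ) (s : ℝ) :
    HasDerivAt (parallelCurve γ θ)
      ((Real.cos θ - kappa γ s * Real.sin θ) • deriv γ s) s := by
  set b := deriv γ s with hb
  set c := deriv (deriv γ) s with hc
  set r := norm3 (deriv γ s) with hr
  have hrpos := RC.r_pos hγ s
  have hrne : r ≠ 0 := hrpos.ne'
  -- derivative of cross3 γ γ'
  have hw : HasDerivAt (fun t => cross3 (γ t) (deriv γ t))
      (cross3 b b + cross3 (γ s) c) s :=
    hasDerivAt_cross3 (RC.hasDeriv hγ s) (RC.hasDeriv2 hγ s)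
  -- derivative of r t := norm3 (deriv γ t), then of its inverse
  have hrinv : HasDerivAt (fun t => (norm3 (deriv γ t))⁻¹)
      (-(dot3 b c / r) / r ^ 2) s := (RC.hasDeriv_r hγ s).inv hrne
  have hn : HasDerivAt (fun t => (norm3 (deriv γ t))⁻¹ • cross3 (γ t) (deriv γ t))
      (r⁻¹ • (cross3 b b + cross3 (γ s) c) +
        (-(dot3 b c / r) / r ^ 2) • cross3 (γ s) b) s :=
    HasDerivAt.smul hrinv hw
  have hmain : HasDerivAt (parallelCurve γ θ)
      (Real.cos θ • b + Real.sin θ •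
        (r⁻¹ • (cross3 b b + cross3 (γ s) c) +
          (-(dot3 b c / r) / r ^ 2) • cross3 (γ s) b)) s := by
    have h1 := ((RC.hasDeriv hγ s).const_smul (Real.cos θ)).add (hn.const_smul (Real.sin θ))
    have hfun : parallelCurve γ θ = fun t =>
        Real.cos θ • γ t + Real.sin θ • ((norm3 (deriv γ t))⁻¹ • cross3 (γ t) (deriv γ t)) := by
      funext t; simp [parallelCurve, unitNormal]
    rw [hfun]
    exact h1
  convert hmain using 1
  -- now prove the vector identity
  rw [cross3_self]
  have hkey := key_vec (γ s) b c
  rw [RC.orth1 hγ s, zero_smul] at hkey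
  -- hkey : q • cross3 (γ s) c - dot3 b c • cross3 (γ s) b + det3 (γ s) b c • b = 0
  have hq : dot3 b b = r ^ 2 := (RC.r_sq hγ s).symm
  have hkap : kappa γ s = det3 (γ s) b c / r ^ 3 := rfl
  funext i
  have hkeyi := congrFun hkey i
  simp only [Pi.add_apply, Pi.smul_apply, Pi.sub_apply, Pi.zero_apply, smul_eq_mul,
    zero_add] at hkeyi ⊢
  rw [hq] at hkeyi
  rw [hkap]
  field_simp
  linear_combination (-(Real.sin θ)) * hkeyi

end Parallel

section Parallel2

variable {γ : ℝ → R3} {θ : ℝ}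

lemma deriv_parallel (hγ : IsRegularCurve γ) :
    deriv (parallelCurve γ θ) = fun s => (Real.cos θ - kappa γ s * Real.sin θ) • deriv γ s :=
  funext fun s => (hasDerivAt_parallel hγ s).deriv

lemma hasDerivAt_kappa (hγ : IsRegularCurve γ) (s : ℝ) :
    ∃ k', HasDerivAt (kappa γ) k' s := by
  have hnum : HasDerivAt (fun t => dot3 (γ t) (cross3 (deriv γ t) (deriv (deriv γ) t))) _ s :=
    hasDerivAt_dot3 (RC.hasDeriv hγ s)
      (hasDerivAt_cross3 (RC.hasDeriv2 hγ s) (RC.hasDeriv3 hγ s))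
  have hden : HasDerivAt (fun t => norm3 (deriv γ t) ^ 3) _ s := (RC.hasDeriv_r hγ s).pow 3
  have hne : norm3 (deriv γ s) ^ 3 ≠ 0 := pow_ne_zero 3 (RC.r_pos hγ s).ne'
  exact ⟨_, hnum.div hden hne⟩

lemma hasDerivAt_rho (hγ : IsRegularCurve γ) (s : ℝ) :
    ∃ ρ', HasDerivAt (fun t => Real.cos θ - kappa γ t * Real.sin θ) ρ' s := by
  obtain ⟨k', hk⟩ := hasDerivAt_kappa hγ s
  exact ⟨_, (hasDerivAt_const s (Real.cos θ)).sub (hk.mul_const (Real.sin θ))⟩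

lemma deriv2_parallel (hγ : IsRegularCurve γ) (s : ℝ) :
    ∃ ρ' : ℝ, deriv (deriv (parallelCurve γ θ)) s =
      ρ' • deriv γ s + (Real.cos θ - kappa γ s * Real.sin θ) • deriv (deriv γ) s := by
  obtain ⟨ρ', hρ⟩ := hasDerivAt_rho (θ := θ) hγ s
  have h := hρ.smul (RC.hasDeriv2 hγ s)
  rw [show (fun t => Real.cos θ - kappa γ t * Real.sin θ) • deriv γ
      = deriv (parallelCurve γ θ) from (deriv_parallel hγ).symm] at h
  exact ⟨ρ', by rw [h.deriv]; abel⟩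

lemma det3_comb (x y b c : R3) (p q u v w : ℝ) :
    det3 (p • x + q • y) (u • b) (v • b + w • c)
      = p * u * w * det3 x b c + q * u * w * det3 y b c := by
  simp [det3, dot3, cross3, Pi.add_apply, Pi.smul_apply, smul_eq_mul]; ring

lemma det3_smul_left (t : ℝ) (x b c : R3) : det3 (t • x) b c = t * det3 x b c := by
  simp [det3, dot3, Pi.smul_apply, smul_eq_mul]; ring

lemma kappa_parallel (hγ : IsRegularCurve γ)
    (hθ : ∀ u, 0 < Real.cos θ - kappa γ u * Real.sin θ) (s : ℝ) :
    kappa (parallelCurve γ θ) s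
      = (Real.sin θ + kappa γ s * Real.cos θ) / (Real.cos θ - kappa γ s * Real.sin θ) := by
  set a := γ s
  set b := deriv γ s with hb
  set c := deriv (deriv γ) s with hc
  set r := norm3 (deriv γ s) with hr
  set ρ := Real.cos θ - kappa γ s * Real.sin θ with hρdef
  have hρpos : 0 < ρ := hθ s
  have hrpos := RC.r_pos hγ s
  have hr0 : r ≠ 0 := hrpos.ne'
  have hq : dot3 b b = r ^ 2 := (RC.r_sq hγ s).symm
  obtain ⟨ρ', h2⟩ := deriv2_parallel (θ := θ) hγ s
  simp only [← hρdef, ← hb, ← hc] at h2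
  have h1 : deriv (parallelCurve γ θ) s = ρ • b := by rw [deriv_parallel hγ]
  have hval : parallelCurve γ θ s = Real.cos θ • a + Real.sin θ • (r⁻¹ • cross3 a b) := rfl
  have hnorm : norm3 (deriv (parallelCurve γ θ) s) = ρ * r := by
    rw [h1, norm3_smul, abs_of_pos hρpos]
  have horth1 : dot3 a b = 0 := RC.orth1 hγ s
  have horth2 : dot3 a c = - dot3 b b := RC.orth2 hγ s
  have hdetn : det3 (r⁻¹ • cross3 a b) b c = r ^ 3 := by
    rw [det3_smul_left]
    have e : det3 (cross3 a b) b c = dot3 (cross3 a b) (cross3 b c) := rfl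
    rw [e, lagrange3, horth1, horth2, hq]
    field_simp; ring
  have hkap : kappa γ s = det3 a b c / r ^ 3 := rfl
  have hdet : det3 a b c = kappa γ s * r ^ 3 := by
    rw [hkap]; field_simp
  have hmain : kappa (parallelCurve γ θ) s
      = det3 (Real.cos θ • a + Real.sin θ • (r⁻¹ • cross3 a b)) (ρ • b) (ρ' • b + ρ • c)
        / (ρ * r) ^ 3 := by
    unfold kappa
    rw [h1, h2, hval, norm3_smul, abs_of_pos hρpos]
  rw [hmain, det3_comb, hdetn, hdet]
  field_simp
  ring

end Parallel2

section Parallel3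

variable {γ : ℝ → R3} {θ : ℝ}

lemma dot3_smul_left (a : ℝ) (u v : R3) : dot3 (a • u) v = a * dot3 u v := by
  unfold dot3; simp [Pi.smul_apply, smul_eq_mul]; ring

lemma dot3_expand (p q : ℝ) (x y : R3) :
    dot3 (p • x + q • y) (p • x + q • y)
      = p ^ 2 * dot3 x x + 2 * p * q * dot3 x y + q ^ 2 * dot3 y y := by
  unfold dot3; simp [Pi.add_apply, Pi.smul_apply, smul_eq_mul]; ring

lemma parallel_smooth (hγ : IsRegularCurve γ) : ContDiff ℝ (⊤ : ℕ∞) (parallelCurve γ θ) := by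
  have hd := RC.deriv_smooth hγ
  have hqs : ContDiff ℝ (⊤ : ℕ∞) (fun s => dot3 (deriv γ s) (deriv γ s)) := by
    exact (((contDiff_pi.mp hd 0).mul (contDiff_pi.mp hd 0)).add
      ((contDiff_pi.mp hd 1).mul (contDiff_pi.mp hd 1))).add
      ((contDiff_pi.mp hd 2).mul (contDiff_pi.mp hd 2))
  have hrs : ContDiff ℝ (⊤ : ℕ∞) (fun s => norm3 (deriv γ s)) :=
    hqs.sqrt fun s => (RC.q_pos hγ s).ne'
  have hrinv : ContDiff ℝ (⊤ : ℕ∞) (fun s => (norm3 (deriv γ s))⁻¹) :=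
    hrs.inv fun s => (RC.r_pos hγ s).ne'
  have hcross : ContDiff ℝ (⊤ : ℕ∞) (fun s => cross3 (γ s) (deriv γ s)) := by
    apply contDiff_pi.mpr
    intro i
    have h0 := ((contDiff_pi.mp hγ.smooth 1).mul (contDiff_pi.mp hd 2)).sub
      ((contDiff_pi.mp hγ.smooth 2).mul (contDiff_pi.mp hd 1))
    have h1 := ((contDiff_pi.mp hγ.smooth 2).mul (contDiff_pi.mp hd 0)).sub
      ((contDiff_pi.mp hγ.smooth 0).mul (contDiff_pi.mp hd 2))
    have h2 := ((contDiff_pi.mp hγ.smooth 0).mul (contDiff_pi.mp hd 1)).sub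
      ((contDiff_pi.mp hγ.smooth 1).mul (contDiff_pi.mp hd 0))
    fin_cases i
    · exact h0
    · exact h1
    · exact h2
  exact ((contDiff_const (c := Real.cos θ)).smul hγ.smooth).add
    ((contDiff_const (c := Real.sin θ)).smul (hrinv.smul hcross))

lemma parallel_regular (hγ : IsRegularCurve γ)
    (hθ : ∀ u, 0 < Real.cos θ - kappa γ u * Real.sin θ) :
    IsRegularCurve (parallelCurve γ θ) := by
  refine ⟨parallel_smooth hγ, ?_, ?_⟩
  · intro s
    have hr := RC.r_pos hγ s
    have hq : dot3 (deriv γ s) (deriv γ s) = norm3 (deriv γ s) ^ 2 := (RC.r_sq hγ s).symm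
    have hval : parallelCurve γ θ s = Real.cos θ • γ s
        + Real.sin θ • ((norm3 (deriv γ s))⁻¹ • cross3 (γ s) (deriv γ s)) := rfl
    rw [hval, dot3_expand]
    rw [dot3_smul_right, dot3_self_cross, hγ.sphere s]
    have hnn : dot3 ((norm3 (deriv γ s))⁻¹ • cross3 (γ s) (deriv γ s))
        ((norm3 (deriv γ s))⁻¹ • cross3 (γ s) (deriv γ s)) = 1 := by
      rw [dot3_smul_left, dot3_smul_right, lagrange3, hγ.sphere s, RC.orth1 hγ s, hq]
      field_simp
      ring
    rw [hnn]
    have := Real.sin_sq_add_cos_sq θ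
    ring_nf
    nlinarith [this]
  · intro s
    rw [congrFun (deriv_parallel hγ) s]
    exact smul_ne_zero (hθ s).ne' (hγ.reg s)

lemma parallel_param (hγ : IsRegularCurve γ)
    (hθ : ∀ u, 0 < Real.cos θ - kappa γ u * Real.sin θ)
    (hp : ∀ u, norm3 (deriv γ u) ^ 2 * (1 + kappa γ u ^ 2) = 4) (s : ℝ) :
    norm3 (deriv (parallelCurve γ θ) s) ^ 2 * (1 + kappa (parallelCurve γ θ) s ^ 2) = 4 := by
  have hρ := hθ s
  have hr := RC.r_pos hγ s
  have hnorm : norm3 (deriv (parallelCurve γ θ) s)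
      = (Real.cos θ - kappa γ s * Real.sin θ) * norm3 (deriv γ s) := by
    rw [congrFun (deriv_parallel hγ) s, norm3_smul, abs_of_pos hρ]
  rw [hnorm, kappa_parallel hγ hθ s]
  have hpy := Real.sin_sq_add_cos_sq θ
  have hps := hp s
  field_simp
  linear_combination (norm3 (deriv γ s) ^ 2
      * (1 + kappa γ s ^ 2)) * hpy
    + hps

lemma parallel_admissible {γ1 γ2 : ℝ → R3} (h : IsAdmissiblePair γ1 γ2)
    (hθ1 : ∀ s, 0 < Real.cos θ - kappa γ1 s * Real.sin θ)
    (hθ2 : ∀ s, 0 < Real.cos θ - kappa γ2 s * Real.sin θ) :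
    IsAdmissiblePair (parallelCurve γ1 θ) (parallelCurve γ2 θ) := by
  refine ⟨parallel_regular h.reg1 hθ1, parallel_regular h.reg2 hθ2,
    parallel_param h.reg1 hθ1 h.param1, parallel_param h.reg2 hθ2 h.param2, ?_⟩
  intro s1 s2
  rw [kappa_parallel h.reg1 hθ1 s1, kappa_parallel h.reg2 hθ2 s2]
  have h1 := hθ1 s1
  have h2 := hθ2 s2
  have hc := h.curv s1 s2
  rw [div_lt_div_iff₀ h2 h1]
  nlinarith [Real.sin_sq_add_cos_sq θ, hc]

end Parallel3

section SU2

open Matrix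

/-- Closed form of `exp (θ/2 • e₁)`. -/
def gM (θ : ℝ) : Mat2 := (Real.cos (θ/2) : ℂ) • 1 + (Real.sin (θ/2) : ℂ) • E1

/-- Its inverse. -/
def gI (θ : ℝ) : Mat2 := (Real.cos (θ/2) : ℂ) • 1 - (Real.sin (θ/2) : ℂ) • E1

lemma E1_mul_E1 : E1 * E1 = -1 := by
  ext i j
  fin_cases i <;> fin_cases j <;>
    simp [E1, Matrix.mul_apply, Fin.sum_univ_two, Matrix.one_apply]

lemma cs_sq (θ : ℝ) : (Real.cos (θ/2) : ℂ) ^ 2 + (Real.sin (θ/2) : ℂ) ^ 2 = 1 := by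
  have := Real.sin_sq_add_cos_sq (θ/2)
  have h : (Real.cos (θ/2)) ^ 2 + (Real.sin (θ/2)) ^ 2 = 1 := by linarith
  exact_mod_cast congrArg (fun x : ℝ => (x : ℂ)) h

lemma gM_mul_gI (θ : ℝ) : gM θ * gI θ = 1 := by
  have h : gM θ * gI θ = ((Real.cos (θ/2) : ℂ) ^ 2 + (Real.sin (θ/2) : ℂ) ^ 2) • 1 := by
    simp only [gM, gI, add_mul, mul_sub, smul_mul_assoc, mul_smul_comm, smul_smul,
      E1_mul_E1, one_mul, mul_one, smul_neg]
    module
  rw [h, cs_sq, one_smul]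

lemma gI_mul_gM (θ : ℝ) : gI θ * gM θ = 1 := by
  have h : gI θ * gM θ = ((Real.cos (θ/2) : ℂ) ^ 2 + (Real.sin (θ/2) : ℂ) ^ 2) • 1 := by
    simp only [gM, gI, add_mul, sub_mul, mul_add, smul_mul_assoc, mul_smul_comm, smul_smul,
      E1_mul_E1, one_mul, mul_one, smul_neg]
    module
  rw [h, cs_sq, one_smul]

lemma gM_inv (θ : ℝ) : (gM θ)⁻¹ = gI θ := Matrix.inv_eq_right_inv (gM_mul_gI θ)

lemma gI_inv (θ : ℝ) : (gI θ)⁻¹ = gM θ := Matrix.inv_eq_right_inv (gI_mul_gM θ)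

lemma exp_E1 (θ : ℝ) : NormedSpace.exp ((θ/2 : ℂ) • E1) = gM θ := by
  set P : Mat2 := !![1, 1; 1, -1] with hP
  have hdet : P.det = -2 := by simp [hP, Matrix.det_fin_two_of]; norm_num
  have hunit : IsUnit P := by
    rw [Matrix.isUnit_iff_isUnit_det, hdet, isUnit_iff_ne_zero]; norm_num
  have hdet' : IsUnit P.det := by rw [hdet, isUnit_iff_ne_zero]; norm_num
  haveI : Invertible P := P.invertibleOfIsUnitDet hdet'
  set v : Fin 2 → ℂ := ![(θ/2 : ℂ) * Complex.I, -((θ/2 : ℂ) * Complex.I)] with hv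
  have hdecomp : (θ/2 : ℂ) • E1 = P * Matrix.diagonal v * P⁻¹ := by
    rw [eq_comm, Matrix.mul_inv_eq_iff_eq_mul_of_invertible]
    ext i j
    fin_cases i <;> fin_cases j <;>
      simp [hP, hv, E1, Matrix.mul_apply, Fin.sum_univ_two, Matrix.diagonal] <;> ring
  rw [hdecomp, Matrix.exp_conj P (Matrix.diagonal v) hunit, Matrix.exp_diagonal]
  rw [Matrix.mul_inv_eq_iff_eq_mul_of_invertible]
  have hexpv : NormedSpace.exp v = ![Complex.exp ((θ/2 : ℂ) * Complex.I),
      Complex.exp (-((θ/2 : ℂ) * Complex.I))] := by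
    funext i
    rw [Pi.coe_exp, ← Complex.exp_eq_exp_ℂ]
    fin_cases i <;> simp [hv]
  rw [hexpv]
  have he1 : Complex.exp ((θ/2 : ℂ) * Complex.I)
      = (Real.cos (θ/2) : ℂ) + (Real.sin (θ/2) : ℂ) * Complex.I := by
    rw [Complex.exp_mul_I]
    push_cast
    norm_num
  have he2 : Complex.exp (-((θ/2 : ℂ) * Complex.I))
      = (Real.cos (θ/2) : ℂ) - (Real.sin (θ/2) : ℂ) * Complex.I := by
    rw [show -((θ/2 : ℂ) * Complex.I) = (-(θ/2 : ℂ)) * Complex.I by ring, Complex.exp_mul_I,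
      Complex.cos_neg, Complex.sin_neg]
    push_cast
    ring_nf
  ext i j
  fin_cases i <;> fin_cases j <;>
    simp [hP, gM, E1, Matrix.mul_apply, Fin.sum_univ_two, Matrix.diagonal, he1, he2,
      Matrix.one_apply] <;> ring

end SU2

section SU2b

open Matrix

lemma E3_mul_E1 : E3 * E1 = E2 := by
  ext i j
  fin_cases i <;> fin_cases j <;>
    simp [E1, E2, E3, Matrix.mul_apply, Fin.sum_univ_two]

lemma E1_mul_E3 : E1 * E3 = -E2 := by
  ext i j
  fin_cases i <;> fin_cases j <;>
    simp [E1, E2, E3, Matrix.mul_apply, Fin.sum_univ_two]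

lemma E2_mul_E1 : E2 * E1 = -E3 := by
  ext i j
  fin_cases i <;> fin_cases j <;>
    simp [E1, E2, E3, Matrix.mul_apply, Fin.sum_univ_two]

lemma star_E1 : star E1 = -E1 := by
  ext i j
  fin_cases i <;> fin_cases j <;>
    simp [E1, Matrix.star_eq_conjTranspose, Matrix.conjTranspose_apply]

lemma star_gI (θ : ℝ) : star (gI θ) = gM θ := by
  unfold gM gI
  rw [sub_eq_add_neg, star_add, star_neg, star_smul, star_smul, star_one, star_E1]
  simp [Complex.star_def, ← Complex.cos_conj, ← Complex.sin_conj, map_div₀, map_ofNat,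
    Complex.conj_ofReal]

lemma gM_eq (θ : ℝ) : gM θ = !![(Real.cos (θ/2) : ℂ), (Real.sin (θ/2) : ℂ) * Complex.I;
    (Real.sin (θ/2) : ℂ) * Complex.I, (Real.cos (θ/2) : ℂ)] := by
  ext i j
  fin_cases i <;> fin_cases j <;> simp [gM, E1, Matrix.one_apply] <;> ring

lemma gM_det (θ : ℝ) : (gM θ).det = 1 := by
  rw [gM_eq, Matrix.det_fin_two_of]
  linear_combination cs_sq θ - ((Real.sin (θ/2) : ℂ)) ^ 2 * Complex.I_sq

lemma gI_det (θ : ℝ) : (gI θ).det = 1 := by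
  have h := congrArg Matrix.det (gI_mul_gM θ)
  rw [Matrix.det_mul, gM_det, mul_one, Matrix.det_one] at h
  exact h

lemma gI_mem (θ : ℝ) : gI θ ∈ Matrix.specialUnitaryGroup (Fin 2) ℂ := by
  rw [Matrix.mem_specialUnitaryGroup_iff]
  exact ⟨Matrix.mem_unitaryGroup_iff.mpr (by rw [star_gI, gI_mul_gM]), gI_det θ⟩

/-- Conjugation by `g⁻¹` fixes `E1`. -/
lemma gI_E1_gM (θ : ℝ) : gI θ * E1 * gM θ = E1 := by
  have hcomm : E1 * gM θ = gM θ * E1 := by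
    simp only [gM, mul_add, add_mul, mul_smul_comm, smul_mul_assoc, mul_one, one_mul]
  calc gI θ * E1 * gM θ = gI θ * (E1 * gM θ) := by rw [mul_assoc]
    _ = gI θ * (gM θ * E1) := by rw [hcomm]
    _ = (gI θ * gM θ) * E1 := by rw [mul_assoc]
    _ = E1 := by rw [gI_mul_gM, one_mul]

/-- Conjugation by `g⁻¹` rotates `E3` towards `E2`. -/
lemma gI_E3_gM (θ : ℝ) : gI θ * E3 * gM θ
    = (Real.cos θ : ℂ) • E3 + (Real.sin θ : ℂ) • E2 := by
  have hcos : (Real.cos θ : ℂ)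
      = (Real.cos (θ/2) : ℂ) ^ 2 - (Real.sin (θ/2) : ℂ) ^ 2 := by
    have h : Real.cos θ = Real.cos (θ/2) ^ 2 - Real.sin (θ/2) ^ 2 := by
      nth_rewrite 1 [show θ = 2 * (θ/2) by ring]
      rw [Real.cos_two_mul]
      have := Real.sin_sq_add_cos_sq (θ/2)
      linarith
    rw [h]; push_cast; ring
  have hsin : (Real.sin θ : ℂ)
      = 2 * (Real.sin (θ/2) : ℂ) * (Real.cos (θ/2) : ℂ) := by
    have h : Real.sin θ = 2 * Real.sin (θ/2) * Real.cos (θ/2) := by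
      nth_rewrite 1 [show θ = 2 * (θ/2) by ring]
      rw [Real.sin_two_mul]
    rw [h]; push_cast; ring
  have step1 : gI θ * E3 = (Real.cos (θ/2) : ℂ) • E3 + (Real.sin (θ/2) : ℂ) • E2 := by
    unfold gI
    rw [sub_mul, smul_mul_assoc, smul_mul_assoc, one_mul, E1_mul_E3, smul_neg, sub_neg_eq_add]
  rw [step1]
  unfold gM
  simp only [add_mul, mul_add, smul_mul_assoc, mul_smul_comm, mul_one, E3_mul_E1,
    E2_mul_E1, hcos, hsin, smul_neg, smul_smul]
  module

end SU2b

section ToSu2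

lemma toSu2_lin (p q : ℝ) (x y : R3) :
    toSu2 (p • x + q • y) = (p : ℂ) • toSu2 x + (q : ℂ) • toSu2 y := by
  unfold toSu2
  simp only [Pi.add_apply, Pi.smul_apply, smul_eq_mul]
  push_cast
  module

lemma toSu2_mul (a b : R3) :
    toSu2 a * toSu2 b = -((dot3 a b : ℂ)) • 1 + toSu2 (cross3 a b) := by
  ext i j
  fin_cases i <;> fin_cases j <;>
    simp [toSu2, E1, E2, E3, dot3, cross3, Matrix.mul_apply, Fin.sum_univ_two,
      Matrix.one_apply, Complex.ext_iff] <;> push_cast <;> constructor <;> ring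

end ToSu2

section AdML

variable {c : Mat2}

lemma SU2.det_isUnit (hc : c ∈ Matrix.specialUnitaryGroup (Fin 2) ℂ) : IsUnit c.det := by
  rw [(Matrix.mem_specialUnitaryGroup_iff.mp hc).2]; exact isUnit_one

lemma SU2.inv_mul (hc : c ∈ Matrix.specialUnitaryGroup (Fin 2) ℂ) : c⁻¹ * c = 1 :=
  Matrix.nonsing_inv_mul c (SU2.det_isUnit hc)

lemma SU2.mul_inv (hc : c ∈ Matrix.specialUnitaryGroup (Fin 2) ℂ) : c * c⁻¹ = 1 :=
  Matrix.mul_nonsing_inv c (SU2.det_isUnit hc)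

lemma AdM_comp (b g x : Mat2) : AdM (b * g) x = AdM b (AdM g x) := by
  unfold AdM
  rw [Matrix.mul_inv_rev]
  simp only [mul_assoc]

lemma AdM_mul (hc : c ∈ Matrix.specialUnitaryGroup (Fin 2) ℂ) (x y : Mat2) :
    AdM c (x * y) = AdM c x * AdM c y := by
  unfold AdM
  rw [show c * x * c⁻¹ * (c * y * c⁻¹) = c * x * (c⁻¹ * c * (y * c⁻¹)) from by
    simp only [mul_assoc], SU2.inv_mul hc, one_mul]
  simp only [mul_assoc]

lemma AdM_smul (a : Mat2) (z : ℂ) (x : Mat2) : AdM a (z • x) = z • AdM a x := by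
  unfold AdM
  rw [mul_smul_comm, smul_mul_assoc]

lemma AdM_add (a x y : Mat2) : AdM a (x + y) = AdM a x + AdM a y := by
  unfold AdM
  rw [mul_add, add_mul]

end AdML

section LiftPar

variable {γ : ℝ → R3} {θ : ℝ} {c : ℝ → Mat2}

lemma lift_parallel (hγ : IsRegularCurve γ)
    (hθ : ∀ u, 0 < Real.cos θ - kappa γ u * Real.sin θ) (hc : IsLift γ c) :
    IsLift (parallelCurve γ θ) (fun s => c s * gI θ) := by
  constructor
  · exact fun s => mul_mem (hc.mem s) (gI_mem θ)
  · intro i j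
    have he : (fun s => (c s * gI θ) i j) = fun s => ∑ k, c s i k * gI θ k j := by
      funext s; rw [Matrix.mul_apply]
    rw [he]
    exact ContDiff.sum fun k _ => (hc.smooth i k).mul contDiff_const
  · intro s
    rw [AdM_comp]
    have h1 : AdM (gI θ) E3 = (Real.cos θ : ℂ) • E3 + (Real.sin θ : ℂ) • E2 := by
      unfold AdM; rw [gI_inv, gI_E3_gM]
    rw [h1, AdM_add, AdM_smul, AdM_smul, hc.ad3 s]
    have h2 : AdM (c s) E2 = toSu2 (unitNormal γ s) := by
      rw [← E3_mul_E1, AdM_mul (hc.mem s), hc.ad3 s, hc.ad1 s, toSu2_mul,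
        dot3_smul_right, RC.orth1 hγ s, cross3_smul_right]
      simp [unitNormal]
    rw [h2]
    have h3 : parallelCurve γ θ s
        = Real.cos θ • γ s + Real.sin θ • unitNormal γ s := rfl
    rw [h3, toSu2_lin]
  · intro s
    rw [AdM_comp]
    have h1 : AdM (gI θ) E1 = E1 := by unfold AdM; rw [gI_inv, gI_E1_gM]
    rw [h1, hc.ad1 s]
    congr 1
    have hρ := hθ s
    have hr := RC.r_pos hγ s
    have hd : deriv (parallelCurve γ θ) s
        = (Real.cos θ - kappa γ s * Real.sin θ) • deriv γ s :=
      congrFun (deriv_parallel hγ) s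
    have hsc : ((Real.cos θ - kappa γ s * Real.sin θ) * norm3 (deriv γ s))⁻¹
        * (Real.cos θ - kappa γ s * Real.sin θ) = (norm3 (deriv γ s))⁻¹ := by
      rw [mul_inv]
      field_simp
    rw [hd, norm3_smul, abs_of_pos hρ, smul_smul, hsc]

lemma fmap_conj (θ : ℝ) (c1 c2 : ℝ → Mat2) (s1 s2 : ℝ) :
    fmap (fun s => c1 s * gI θ) (fun s => c2 s * gI θ) s1 s2
      = gM θ * fmap c1 c2 s1 s2 * gI θ := by
  unfold fmap
  have hgg : ∀ X : Mat2, gI θ * (gM θ * X) = X := fun X => by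
    rw [← mul_assoc, gI_mul_gM, one_mul]
  rw [Matrix.mul_inv_rev, Matrix.mul_inv_rev, gI_inv]
  simp only [mul_assoc]
  rw [hgg]

end LiftPar

theorem stmt15 (γ1 γ2 : ℝ → R3) (θ : ℝ) (c1 c2 : ℝ → Mat2)
    (h : IsAdmissiblePair γ1 γ2) (hc1 : IsLift γ1 c1) (hc2 : IsLift γ2 c2)
    (hθ1 : ∀ s, 0 < Real.cos θ - kappa γ1 s * Real.sin θ)
    (hθ2 : ∀ s, 0 < Real.cos θ - kappa γ2 s * Real.sin θ) :
    IsAdmissiblePair (parallelCurve γ1 θ) (parallelCurve γ2 θ) ∧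
    ∃ d1 d2 : ℝ → Mat2,
      IsLift (parallelCurve γ1 θ) d1 ∧ IsLift (parallelCurve γ2 θ) d2 ∧
      ∀ s1 s2 : ℝ, fmap d1 d2 s1 s2 =
        NormedSpace.exp ((θ / 2 : ℂ) • E1) * fmap c1 c2 s1 s2 *
          (NormedSpace.exp ((θ / 2 : ℂ) • E1))⁻¹ := by
  refine ⟨parallel_admissible h hθ1 hθ2,
    fun s => c1 s * gI θ, fun s => c2 s * gI θ,
    lift_parallel h.reg1 hθ1 hc1, lift_parallel h.reg2 hθ2 hc2, fun s1 s2 => ?_⟩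
  rw [fmap_conj, show ((θ : ℂ) / 2) • E1 = ((θ/2 : ℂ)) • E1 from rfl, exp_E1, gM_inv]
end
end

section
/- Let γ be a generic closed regular curve in S² of period l > 0 with exactly one crossing, i.e. #(γ) = 1. Then there exist closed intervals [a,b] and [a',b'] of length less than l such that the restriction γ|_{[a,b]} is a positive shell and the restriction γ|_{[a',b']} is a negative shell. -/
noncomputable section

open Matrix

lemma det3_swap (a b c : R3) : det3 a c b = - det3 a b c := by
  simp only [det3, dot3, cross3]
  simp [Matrix.cons_val_zero, Matrix.cons_val_one]
  ring

lemma cross_triple (a b c : R3) :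
    cross3 (cross3 a b) c = dot3 c a • b - dot3 c b • a := by
  funext i
  fin_cases i <;>
    simp [cross3, dot3, Pi.smul_apply, smul_eq_mul, Pi.sub_apply] <;> ring

lemma dot3_self_pos_s19 {v : R3} (hv : v ≠ 0) : 0 < dot3 v v := by
  simp only [dot3]
  rcases lt_or_eq_of_le (by nlinarith [sq_nonneg (v 0), sq_nonneg (v 1), sq_nonneg (v 2)] :
    (0:ℝ) ≤ v 0 * v 0 + v 1 * v 1 + v 2 * v 2) with h | h
  · exact h
  · exfalso; apply hv; funext i
    have h0 : v 0 = 0 := by nlinarith [sq_nonneg (v 1), sq_nonneg (v 2), sq_nonneg (v 0)]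
    have h1 : v 1 = 0 := by nlinarith [sq_nonneg (v 1), sq_nonneg (v 2), sq_nonneg (v 0)]
    have h2 : v 2 = 0 := by nlinarith [sq_nonneg (v 1), sq_nonneg (v 2), sq_nonneg (v 0)]
    fin_cases i <;> assumption

lemma eq_smul_of_cross_eq_zero {a b : R3} (h : cross3 a b = 0) (hb : dot3 b b ≠ 0) :
    a = (dot3 b a / dot3 b b) • b := by
  have := cross_triple a b b
  rw [h] at this
  have hz : (0 : R3) = dot3 b a • b - dot3 b b • a := by
    rw [← this]; funext i; fin_cases i <;> simp [cross3]
  have : dot3 b b • a = dot3 b a • b := by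
    have := hz.symm; rw [sub_eq_zero] at this; exact this.symm
  funext i
  have hi := congrFun this i
  simp only [Pi.smul_apply, smul_eq_mul] at hi ⊢
  field_simp
  linarith [hi]

lemma det3_ne_zero {x v w : R3} (hx : dot3 x x = 1) (hxv : dot3 x v = 0)
    (hxw : dot3 x w = 0) (h : LinearIndependent ℝ ![v, w]) : det3 x v w ≠ 0 := by
  intro h0
  have hux : cross3 (cross3 v w) x = 0 := by
    rw [cross_triple, hxv, hxw]; funext i; fin_cases i <;> simp
  have hu : cross3 v w = (dot3 x (cross3 v w) / dot3 x x) • x :=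
    eq_smul_of_cross_eq_zero hux (by rw [hx]; exact one_ne_zero)
  have hd : dot3 x (cross3 v w) = det3 x v w := rfl
  rw [hd, h0] at hu
  simp only [zero_div, zero_smul] at hu
  have hv : v ≠ 0 := by
    have := h.ne_zero 0
    simpa using this
  have hvv : dot3 v v ≠ 0 := (dot3_self_pos_s19 hv).ne'
  have hwv : cross3 w v = 0 := by
    funext i
    have := congrFun hu i
    fin_cases i <;> simp [cross3] at this ⊢ <;> linarith
  have hw : w = (dot3 v w / dot3 v v) • v := eq_smul_of_cross_eq_zero hwv hvv
  obtain ⟨h1, h2⟩ := LinearIndependent.pair_iff.1 h (dot3 v w / dot3 v v) (-1)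
    (by rw [neg_one_smul, ← hw]; simp)
  norm_num at h2

lemma li_swap {v w : R3} (h : LinearIndependent ℝ ![v, w]) :
    LinearIndependent ℝ ![w, v] := by
  rw [LinearIndependent.pair_iff] at h ⊢
  intro s t hst
  have := h t s (by rw [← hst]; abel)
  exact ⟨this.2, this.1⟩

lemma int_mul_eq_zero {l : ℝ} (hl : 0 < l) {k : ℤ} (h1 : -l < (k:ℝ) * l)
    (h2 : (k:ℝ) * l < l) : (k:ℝ) = 0 := by
  have : k = 0 := by
    rcases lt_trichotomy k 0 with h | h | h
    · exfalso
      have : (k:ℝ) ≤ -1 := by exact_mod_cast Int.le_of_lt_add_one (by simpa using h)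
      nlinarith
    · exact h
    · exfalso
      have : (1:ℝ) ≤ (k:ℝ) := by exact_mod_cast h
      nlinarith
  exact_mod_cast this

lemma dot3_deriv_zero {γ : ℝ → R3} (hreg : IsRegularCurve γ) (s : ℝ) :
    dot3 (γ s) (deriv γ s) = 0 := by
  have hγ : HasDerivAt γ (deriv γ s) s :=
    ((hreg.smooth.differentiable (by simp)) s).hasDerivAt
  have hcomp := hasDerivAt_pi.1 hγ
  have hg : HasDerivAt (fun t => γ t 0 * γ t 0 + γ t 1 * γ t 1 + γ t 2 * γ t 2)
      ((deriv γ s 0 * γ s 0 + γ s 0 * deriv γ s 0)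
        + (deriv γ s 1 * γ s 1 + γ s 1 * deriv γ s 1)
        + (deriv γ s 2 * γ s 2 + γ s 2 * deriv γ s 2)) s :=
    (((hcomp 0).mul (hcomp 0)).add ((hcomp 1).mul (hcomp 1))).add ((hcomp 2).mul (hcomp 2))
  have hgc : (fun t => γ t 0 * γ t 0 + γ t 1 * γ t 1 + γ t 2 * γ t 2) = fun _ => (1:ℝ) := by
    funext t
    exact hreg.sphere t
  rw [hgc] at hg
  have huniq := hg.unique (hasDerivAt_const s 1)
  simp only [dot3]
  linarith

theorem stmt19 (γ : ℝ → R3) (l : ℝ)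
    (hreg : IsRegularCurve γ) (hper : HasPeriod γ l)
    (hgen : IsGeneric γ l) (hone : crossings γ l = 1) :
    (∃ a b : ℝ, b - a < l ∧ IsPositiveShell γ a b) ∧
    ∃ a b : ℝ, b - a < l ∧ IsNegativeShell γ a b := by
  obtain ⟨hl, hperiod⟩ := hper
  have hper' : Function.Periodic γ l := hperiod
  have hdper : ∀ s, deriv γ (s + l) = deriv γ s := by
    intro s
    have h1 : (fun x => γ (x + l)) = γ := funext fun x => hperiod x
    calc deriv γ (s + l) = deriv (fun x => γ (x + l)) s := (deriv_comp_add_const γ l s).symm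
      _ = deriv γ s := by rw [h1]
  have hint : ∀ (s : ℝ) (k : ℤ), γ (s + k * l) = γ s := fun s k => (hper'.int_mul k) s
  have hdot : ∀ s, dot3 (γ s) (deriv γ s) = 0 := dot3_deriv_zero hreg
  unfold crossings at hone
  obtain ⟨p0, hS⟩ := Set.ncard_eq_one.1 hone
  have hp0 : p0 ∈ {p : R3 | ∃ s t : ℝ, γ s = p ∧ γ t = p ∧ ¬∃ k : ℤ, s - t = k * l} := by
    rw [hS]; exact rfl
  obtain ⟨s0, t, hs, ht, hnk⟩ := hp0
  set k0 : ℤ := ⌊(t - s0) / l⌋ with hk0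
  set t0 : ℝ := t - k0 * l with ht0
  have hfr1 : (k0:ℝ) * l ≤ t - s0 := (le_div_iff₀ hl).1 (Int.floor_le _)
  have hfr2 : t - s0 < ((k0:ℝ) + 1) * l := by
    have := Int.lt_floor_add_one ((t - s0) / l)
    have h2 := (div_lt_iff₀ hl).1 this
    push_cast at h2 ⊢
    linarith
  have ht0s : 0 ≤ t0 - s0 := by simp only [ht0]; linarith
  have ht0l : t0 - s0 < l := by simp only [ht0]; nlinarith
  have hγt0 : γ t0 = γ t := by
    rw [show t0 = t + ((-k0 : ℤ) : ℝ) * l by push_cast; ring]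
    exact hint t (-k0)
  have hne0 : t0 ≠ s0 := by
    intro h
    exact hnk ⟨-k0, by push_cast; simp only [ht0] at h; linarith⟩
  have hst0 : s0 < t0 := lt_of_le_of_ne (by linarith) (Ne.symm hne0)
  have hγeq : γ s0 = γ t0 := by rw [hγt0, hs, ht]
  have hnotk : ¬∃ k : ℤ, s0 - t0 = k * l := by
    rintro ⟨k, hk⟩
    have hz : (k:ℝ) = 0 := int_mul_eq_zero hl (by linarith) (by linarith)
    rw [hz, zero_mul] at hk
    exact hne0 (by linarith)
  obtain ⟨hLI, hU⟩ := hgen s0 t0 hγeq hnotk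
  have hmem : ∀ x y : ℝ, γ x = γ y → (¬∃ k : ℤ, x - y = k * l) → γ x = p0 := by
    intro x y hxy hk
    have hx : γ x ∈ {p : R3 | ∃ s t : ℝ, γ s = p ∧ γ t = p ∧ ¬∃ k : ℤ, s - t = k * l} :=
      ⟨x, y, rfl, hxy.symm, hk⟩
    rw [hS] at hx
    exact hx
  have resolve : ∀ x : ℝ, s0 ≤ x → x < s0 + l → γ x = p0 → x = s0 ∨ x = t0 := by
    intro x h1 h2 hx
    rcases hU x (hx.trans hs.symm) with ⟨k, hk⟩ | ⟨k, hk⟩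
    · left
      have hz : (k:ℝ) = 0 := int_mul_eq_zero hl (by linarith) (by linarith)
      rw [hz, zero_mul] at hk
      linarith
    · right
      have hz : (k:ℝ) = 0 := int_mul_eq_zero hl (by linarith) (by linarith)
      rw [hz, zero_mul] at hk
      linarith
  have inj1 : Set.InjOn γ (Set.Ico s0 t0) := by
    intro x hx y hy hxy
    by_contra hne
    have hk : ¬∃ k : ℤ, x - y = k * l := by
      rintro ⟨k, hk⟩
      have hz : (k:ℝ) = 0 := int_mul_eq_zero hl
        (by obtain ⟨hx1, hx2⟩ := hx; obtain ⟨hy1, hy2⟩ := hy; linarith)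
        (by obtain ⟨hx1, hx2⟩ := hx; obtain ⟨hy1, hy2⟩ := hy; linarith)
      rw [hz, zero_mul] at hk
      exact hne (by linarith)
    have hxs : x = s0 := by
      rcases resolve x hx.1 (by obtain ⟨_, h⟩ := hx; linarith) (hmem x y hxy hk) with h | h
      · exact h
      · exact absurd h (by obtain ⟨_, h2⟩ := hx; exact fun he => absurd (he ▸ h2) (lt_irrefl _))
    have hys : y = s0 := by
      have hk' : ¬∃ k : ℤ, y - x = k * l := by
        rintro ⟨k, hk'⟩
        exact hk ⟨-k, by push_cast; linarith⟩
      rcases resolve y hy.1 (by obtain ⟨_, h⟩ := hy; linarith) (hmem y x hxy.symm hk') with h | h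
      · exact h
      · exact absurd h (by obtain ⟨_, h2⟩ := hy; exact fun he => absurd (he ▸ h2) (lt_irrefl _))
    exact hne (hxs.trans hys.symm)
  have inj2 : Set.InjOn γ (Set.Ico t0 (s0 + l)) := by
    intro x hx y hy hxy
    by_contra hne
    have hk : ¬∃ k : ℤ, x - y = k * l := by
      rintro ⟨k, hk⟩
      have hz : (k:ℝ) = 0 := int_mul_eq_zero hl
        (by obtain ⟨hx1, hx2⟩ := hx; obtain ⟨hy1, hy2⟩ := hy; linarith)
        (by obtain ⟨hx1, hx2⟩ := hx; obtain ⟨hy1, hy2⟩ := hy; linarith)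
      rw [hz, zero_mul] at hk
      exact hne (by linarith)
    have hxs : x = t0 := by
      rcases resolve x (by obtain ⟨h, _⟩ := hx; linarith) hx.2 (hmem x y hxy hk) with h | h
      · exact absurd h (by obtain ⟨h1, _⟩ := hx; exact fun he => by rw [he] at h1; linarith)
      · exact h
    have hys : y = t0 := by
      have hk' : ¬∃ k : ℤ, y - x = k * l := by
        rintro ⟨k, hk'⟩
        exact hk ⟨-k, by push_cast; linarith⟩
      rcases resolve y (by obtain ⟨h, _⟩ := hy; linarith) hy.2 (hmem y x hxy.symm hk') with h | h
      · exact absurd h (by obtain ⟨h1, _⟩ := hy; exact fun he => by rw [he] at h1; linarith)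
      · exact h
    exact hne (hxs.trans hys.symm)
  have hdot2 : dot3 (γ s0) (deriv γ t0) = 0 := by rw [hγeq]; exact hdot t0
  have hD : det3 (γ s0) (deriv γ s0) (deriv γ t0) ≠ 0 :=
    det3_ne_zero (hreg.sphere s0) (hdot s0) hdot2 hLI
  have hper_s0 : γ (s0 + l) = γ s0 := hperiod s0
  have shell1 : IsShell γ s0 t0 := ⟨hst0, inj1, hγeq, hLI⟩
  have hLI2 : LinearIndependent ℝ ![deriv γ t0, deriv γ (s0 + l)] := by
    rw [hdper s0]
    exact li_swap hLI
  have shell2 : IsShell γ t0 (s0 + l) :=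
    ⟨by linarith, inj2, by rw [hper_s0, hγeq], hLI2⟩
  have hdet2 : det3 (γ t0) (deriv γ t0) (deriv γ (s0 + l))
      = - det3 (γ s0) (deriv γ s0) (deriv γ t0) := by
    rw [hdper s0, ← hγeq, det3_swap]
  rcases lt_or_gt_of_ne hD with hneg | hpos
  · exact ⟨⟨s0, t0, by linarith, shell1, hneg⟩,
      ⟨t0, s0 + l, by linarith, shell2, by rw [hdet2]; linarith⟩⟩
  · exact ⟨⟨t0, s0 + l, by linarith, shell2, by rw [hdet2]; linarith⟩,
      ⟨s0, t0, by linarith, shell1, hpos⟩⟩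
end
end
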